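/- arXiv:1806.03596 — 2 statements merged into one kernel-verified Lean document; each statement's English description precedes it below -/
import Mathlib

section
/- Let (W_j, Θ_j) and (W_j, Λ_j) both be gf-orthonormal bases for H with respect to {v_j}, and let V : H → H be the bounded operator V f = Σ_{j∈J} v_j² π_{W_j} Λ_j* Θ_j π_{W_j} f. Then V is unitary. -/
/-!
Write `A_j g = v_j π_{W_j} Λ_j* g` and `B_j g = v_j π_{W_j} Θ_j* g`. Condition (i) says that the
`A_j : H_j → H` are isometries with pairwise orthogonal ranges, and since
`A_j* f = v_j Λ_j π_{W_j} f`, Parseval (ii) says that no nonzero `f` is orthogonal to all of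
them. So `H` is the Hilbert sum of the `H_j` along the `A_j`, and the unitary `H ≅ ℓ²(H_j)` it
induces is `f ↦ (A_j* f)_j`; likewise for the `B_j`. As `V f = Σ_j A_j (B_j* f)`, the operator `V`
is the `B`-identification followed by the inverse of the `A`-identification, hence unitary.
-/

open scoped InnerProductSpace
open ContinuousLinearMap

/-- The orthogonal projection of `H` onto the closed subspace `W j`, as a map `H →L[ℂ] H`. -/
noncomputable def gfProj {H : Type*} [NormedAddCommGroup H] [InnerProductSpace ℂ H]
    {J : Type*} (W : J → Submodule ℂ H) [∀ j, CompleteSpace (W j)] (j : J) : H →L[ℂ] H :=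
  (W j).subtypeL.comp ((W j).orthogonalProjectionOnto)

section HilbertSum

variable {𝕜 ι E : Type*} [RCLike 𝕜] [NormedAddCommGroup E] [InnerProductSpace 𝕜 E]
  [CompleteSpace E] {G : ι → Type*} [∀ i, NormedAddCommGroup (G i)]
  [∀ i, InnerProductSpace 𝕜 (G i)] [∀ i, CompleteSpace (G i)] {U V : ∀ i, G i →ₗᵢ[𝕜] E}

theorem OrthogonalFamily.isHilbertSum_of_adjoint_eq_zero (hV : OrthogonalFamily 𝕜 G V)
    (htotal : ∀ x, (∀ i, adjoint (V i).toContinuousLinearMap x = 0) → x = 0) :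
    IsHilbertSum 𝕜 G V := by
  refine IsHilbertSum.mk hV ?_
  rw [top_le_iff, Submodule.topologicalClosure_eq_top_iff, ← Submodule.iInf_orthogonal,
    Submodule.eq_bot_iff]
  intro x hx
  refine htotal x fun i => ?_
  change x ∈ (adjoint (V i).toContinuousLinearMap).ker
  rw [← orthogonal_range]
  exact Submodule.mem_iInf _ |>.mp hx i

theorem IsHilbertSum.linearIsometryEquiv_apply_eq_adjoint (hV : IsHilbertSum 𝕜 G V) (x : E)
    (i : ι) : hV.linearIsometryEquiv x i = adjoint (V i).toContinuousLinearMap x := by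
  set w := hV.linearIsometryEquiv x
  have hsum : HasSum (fun k => V k (w k)) x := by
    simpa [w] using hV.hasSum_linearIsometryEquiv_symm w
  refine ext_inner_left 𝕜 fun y => ?_
  calc ⟪y, w i⟫_𝕜 = ∑' k, ⟪V i y, V k (w k)⟫_𝕜 := by
        rw [tsum_eq_single i fun k hk => hV.OrthogonalFamily (Ne.symm hk) y _,
          LinearIsometry.inner_map_map]
    _ = ⟪V i y, x⟫_𝕜 := (hsum.mapL (innerSL 𝕜 (V i y))).tsum_eq
    _ = ⟪y, adjoint (V i).toContinuousLinearMap x⟫_𝕜 :=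
        (adjoint_inner_right (V i).toContinuousLinearMap y x).symm

theorem IsHilbertSum.hasSum_apply_adjoint_apply (hU : IsHilbertSum 𝕜 G U)
    (hV : IsHilbertSum 𝕜 G V) (x : E) :
    HasSum (fun i => U i (adjoint (V i).toContinuousLinearMap x))
      (hV.linearIsometryEquiv.trans hU.linearIsometryEquiv.symm x) := by
  simpa only [LinearIsometryEquiv.trans_apply, hV.linearIsometryEquiv_apply_eq_adjoint] using
    hU.hasSum_linearIsometryEquiv_symm (hV.linearIsometryEquiv x)

end HilbertSum

section GfOrthonormalBasis

variable {H : Type*} [NormedAddCommGroup H] [InnerProductSpace ℂ H] [CompleteSpace H]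
  {J : Type*} {Hs : J → Type*} [∀ j, NormedAddCommGroup (Hs j)]
  [∀ j, InnerProductSpace ℂ (Hs j)] [∀ j, CompleteSpace (Hs j)]
  (W : J → Submodule ℂ H) [∀ j, CompleteSpace (W j)] (v : J → ℝ) (Λ : ∀ j, H →L[ℂ] Hs j)

theorem adjoint_gfProj (j : J) : adjoint (gfProj W j) = gfProj W j :=
  isSelfAdjoint_starProjection (W j)

noncomputable def gfSynthesis (j : J) : Hs j →L[ℂ] H :=
  v j • (gfProj W j ∘L adjoint (Λ j))

theorem adjoint_gfSynthesis_apply (j : J) (f : H) :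
    adjoint (gfSynthesis W v Λ j) f = v j • Λ j (gfProj W j f) := by
  rw [gfSynthesis, ← Complex.coe_smul, map_smulₛₗ, adjoint_comp, adjoint_adjoint, adjoint_gfProj]
  simp

noncomputable def gfSynthesisIsometry
    (hΛ : ∀ j (g g' : Hs j), ⟪gfSynthesis W v Λ j g, gfSynthesis W v Λ j g'⟫_ℂ = ⟪g, g'⟫_ℂ)
    (j : J) : Hs j →ₗᵢ[ℂ] H :=
  (gfSynthesis W v Λ j).toLinearMap.isometryOfInner (hΛ j)

@[simp]
theorem gfSynthesisIsometry_apply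
    (hΛ : ∀ j (g g' : Hs j), ⟪gfSynthesis W v Λ j g, gfSynthesis W v Λ j g'⟫_ℂ = ⟪g, g'⟫_ℂ)
    (j : J) (g : Hs j) : gfSynthesisIsometry W v Λ hΛ j g = gfSynthesis W v Λ j g :=
  rfl

@[simp]
theorem gfSynthesisIsometry_toContinuousLinearMap
    (hΛ : ∀ j (g g' : Hs j), ⟪gfSynthesis W v Λ j g, gfSynthesis W v Λ j g'⟫_ℂ = ⟪g, g'⟫_ℂ)
    (j : J) : (gfSynthesisIsometry W v Λ hΛ j).toContinuousLinearMap = gfSynthesis W v Λ j :=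
  rfl

theorem gfSynthesis_apply_adjoint_gfSynthesis_apply (Θ : ∀ j, H →L[ℂ] Hs j) (j : J) (f : H) :
    gfSynthesis W v Λ j (adjoint (gfSynthesis W v Θ j) f)
      = v j ^ 2 • gfProj W j (adjoint (Λ j) (Θ j (gfProj W j f))) := by
  rw [adjoint_gfSynthesis_apply]
  simp [gfSynthesis, smul_smul, sq]

theorem isHilbertSum_gfSynthesisIsometry
    (hΛ_orth_eq : ∀ j (g g' : Hs j),
      ⟪gfSynthesis W v Λ j g, gfSynthesis W v Λ j g'⟫_ℂ = ⟪g, g'⟫_ℂ)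
    (hΛ_orth_ne : ∀ i j, i ≠ j → ∀ (gi : Hs i) (gj : Hs j),
      ⟪gfSynthesis W v Λ i gi, gfSynthesis W v Λ j gj⟫_ℂ = 0)
    (hΛ_parseval : ∀ f : H, HasSum (fun j => v j ^ 2 * ‖Λ j (gfProj W j f)‖ ^ 2) (‖f‖ ^ 2)) :
    IsHilbertSum ℂ Hs (gfSynthesisIsometry W v Λ hΛ_orth_eq) := by
  refine OrthogonalFamily.isHilbertSum_of_adjoint_eq_zero (fun i j hij => hΛ_orth_ne i j hij)
    fun f hf => ?_
  have hterms : ∀ j, v j ^ 2 * ‖Λ j (gfProj W j f)‖ ^ 2 = 0 := fun j => by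
    have hj : adjoint (gfSynthesis W v Λ j) f = 0 := hf j
    rw [adjoint_gfSynthesis_apply] at hj
    rw [← sq_abs, ← Real.norm_eq_abs, ← mul_pow, ← norm_smul, hj, norm_zero, sq, mul_zero]
  have hnorm : ‖f‖ ^ 2 = 0 := (hΛ_parseval f).unique (by simpa only [hterms] using hasSum_zero)
  simpa using hnorm

end GfOrthonormalBasis

theorem gf_orthonormal_bases_operator_unitary_general
    {H : Type*} [NormedAddCommGroup H] [InnerProductSpace ℂ H] [CompleteSpace H]
    {J : Type*}
    {Hs : J → Type*} [∀ j, NormedAddCommGroup (Hs j)] [∀ j, InnerProductSpace ℂ (Hs j)]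
    [∀ j, CompleteSpace (Hs j)]
    (W : J → Submodule ℂ H) [∀ j, CompleteSpace (W j)]
    (v : J → ℝ)
    (Θ : ∀ j, H →L[ℂ] Hs j) (Λ : ∀ j, H →L[ℂ] Hs j)
    (hΘ_orth_eq : ∀ j (g g' : Hs j),
        ⟪v j • gfProj W j (adjoint (Θ j) g), v j • gfProj W j (adjoint (Θ j) g')⟫_ℂ
          = ⟪g, g'⟫_ℂ)
    (hΘ_orth_ne : ∀ i j, i ≠ j → ∀ (gi : Hs i) (gj : Hs j),
        ⟪v i • gfProj W i (adjoint (Θ i) gi), v j • gfProj W j (adjoint (Θ j) gj)⟫_ℂ = 0)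
    (hΘ_parseval : ∀ f : H,
        HasSum (fun j => (v j) ^ 2 * ‖Θ j (gfProj W j f)‖ ^ 2) (‖f‖ ^ 2))
    (hΛ_orth_eq : ∀ j (g g' : Hs j),
        ⟪v j • gfProj W j (adjoint (Λ j) g), v j • gfProj W j (adjoint (Λ j) g')⟫_ℂ
          = ⟪g, g'⟫_ℂ)
    (hΛ_orth_ne : ∀ i j, i ≠ j → ∀ (gi : Hs i) (gj : Hs j),
        ⟪v i • gfProj W i (adjoint (Λ i) gi), v j • gfProj W j (adjoint (Λ j) gj)⟫_ℂ = 0)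
    (hΛ_parseval : ∀ f : H,
        HasSum (fun j => (v j) ^ 2 * ‖Λ j (gfProj W j f)‖ ^ 2) (‖f‖ ^ 2))
    (V : H →L[ℂ] H)
    (hV : ∀ f : H,
        HasSum (fun j => ((v j) ^ 2 : ℝ) •
          gfProj W j (adjoint (Λ j) (Θ j (gfProj W j f)))) (V f)) :
    V.comp (adjoint V) = ContinuousLinearMap.id ℂ H ∧
    (adjoint V).comp V = ContinuousLinearMap.id ℂ H := by
  have hΛ := isHilbertSum_gfSynthesisIsometry W v Λ hΛ_orth_eq hΛ_orth_ne hΛ_parseval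
  have hΘ := isHilbertSum_gfSynthesisIsometry W v Θ hΘ_orth_eq hΘ_orth_ne hΘ_parseval
  obtain rfl : V = (hΘ.linearIsometryEquiv.trans hΛ.linearIsometryEquiv.symm : H →L[ℂ] H) := by
    ext f
    have hsum := hΛ.hasSum_apply_adjoint_apply hΘ f
    simp only [gfSynthesisIsometry_apply W v Λ hΛ_orth_eq,
      gfSynthesisIsometry_toContinuousLinearMap W v Θ hΘ_orth_eq,
      gfSynthesis_apply_adjoint_gfSynthesis_apply] at hsum
    exact (hV f).unique hsum
  rw [LinearIsometryEquiv.adjoint_eq_symm]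
  constructor <;> ext <;> simp

/-- if `(W_j, Θ_j)` and `(W_j, Λ_j)` are both gf-orthonormal bases w.r.t.
`{v_j}` and `V f = Σ_j v_j² π_{W_j} Λ_j* Θ_j π_{W_j} f`, then `V` is unitary. -/
theorem gf_orthonormal_bases_operator_unitary
    {H : Type*} [NormedAddCommGroup H] [InnerProductSpace ℂ H] [CompleteSpace H]
    {J : Type*} [Countable J]
    {Hs : J → Type*} [∀ j, NormedAddCommGroup (Hs j)] [∀ j, InnerProductSpace ℂ (Hs j)]
    [∀ j, CompleteSpace (Hs j)]
    (W : J → Submodule ℂ H) [∀ j, CompleteSpace (W j)]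
    (v : J → ℝ) (hv : ∀ j, 0 < v j)
    (Θ : ∀ j, H →L[ℂ] Hs j) (Λ : ∀ j, H →L[ℂ] Hs j)
    (hΘ_orth_eq : ∀ j (g g' : Hs j),
        ⟪v j • gfProj W j (adjoint (Θ j) g), v j • gfProj W j (adjoint (Θ j) g')⟫_ℂ
          = ⟪g, g'⟫_ℂ)
    (hΘ_orth_ne : ∀ i j, i ≠ j → ∀ (gi : Hs i) (gj : Hs j),
        ⟪v i • gfProj W i (adjoint (Θ i) gi), v j • gfProj W j (adjoint (Θ j) gj)⟫_ℂ = 0)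
    (hΘ_parseval : ∀ f : H,
        HasSum (fun j => (v j) ^ 2 * ‖Θ j (gfProj W j f)‖ ^ 2) (‖f‖ ^ 2))
    (hΛ_orth_eq : ∀ j (g g' : Hs j),
        ⟪v j • gfProj W j (adjoint (Λ j) g), v j • gfProj W j (adjoint (Λ j) g')⟫_ℂ
          = ⟪g, g'⟫_ℂ)
    (hΛ_orth_ne : ∀ i j, i ≠ j → ∀ (gi : Hs i) (gj : Hs j),
        ⟪v i • gfProj W i (adjoint (Λ i) gi), v j • gfProj W j (adjoint (Λ j) gj)⟫_ℂ = 0)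
    (hΛ_parseval : ∀ f : H,
        HasSum (fun j => (v j) ^ 2 * ‖Λ j (gfProj W j f)‖ ^ 2) (‖f‖ ^ 2))
    (V : H →L[ℂ] H)
    (hV : ∀ f : H,
        HasSum (fun j => ((v j) ^ 2 : ℝ) •
          gfProj W j (adjoint (Λ j) (Θ j (gfProj W j f)))) (V f)) :
    V.comp (adjoint V) = ContinuousLinearMap.id ℂ H ∧
    (adjoint V).comp V = ContinuousLinearMap.id ℂ H :=
  gf_orthonormal_bases_operator_unitary_general W v Θ Λ hΘ_orth_eq hΘ_orth_ne hΘ_parseval hΛ_orth_eq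
    hΛ_orth_ne hΛ_parseval V hV
end

section
/- Let Λ = (W_j, Λ_j, v_j) be a g-fusion frame for H with bounds A, B, let Θ_j : H → H_j be bounded linear operators, and let 0 < R < A be such that Σ_{j∈J} v_j² ‖π_{W_j}Λ_j*Λ_jπ_{W_j} f − π_{W_j}Θ_j*Θ_jπ_{W_j} f‖ ≤ R‖f‖ for all f ∈ H. Then Θ = (W_j, Θ_j, v_j) is a g-fusion frame for H with lower bound A − R and upper bound B + R√(B/A). -/
/-!
Since `π_W` is self-adjoint, `Re ⟪π_W Λ* Λ π_W f, f⟫ = ‖Λ π_W f‖²`. Hence the frame sum of `Θ` is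
the frame sum of `Λ` minus `Σ_j v_j² Re ⟪D_j, f⟫` with `D_j = π_{W_j}(Λ_j*Λ_j - Θ_j*Θ_j)π_{W_j} f`, and by
Cauchy–Schwarz the latter has absolute value at most `R‖f‖²`. This gives the bounds `A - R` and
`B + R ≤ B + R√(B/A)`.
-/

open scoped InnerProductSpace
open ContinuousLinearMap

theorem gfProj_eq_starProjection {H : Type*} [NormedAddCommGroup H] [InnerProductSpace ℂ H]
    {J : Type*} (W : J → Submodule ℂ H) [∀ j, CompleteSpace (W j)] (j : J) :
    gfProj W j = (W j).starProjection :=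
  rfl

theorem Submodule.re_inner_starProjection_adjoint_apply {𝕜 E F : Type*} [RCLike 𝕜]
    [NormedAddCommGroup E] [InnerProductSpace 𝕜 E] [CompleteSpace E]
    [NormedAddCommGroup F] [InnerProductSpace 𝕜 F] [CompleteSpace F]
    (K : Submodule 𝕜 E) [K.HasOrthogonalProjection] (T : E →L[𝕜] F) (f : E) :
    RCLike.re ⟪K.starProjection (adjoint T (T (K.starProjection f))), f⟫_𝕜 =
      ‖T (K.starProjection f)‖ ^ 2 := by
  rw [K.inner_starProjection_left_eq_right, adjoint_inner_left, inner_self_eq_norm_sq]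

theorem gfusion_frame_perturbation_R_general
    {H : Type*} [NormedAddCommGroup H] [InnerProductSpace ℂ H] [CompleteSpace H]
    {J : Type*}
    {Hs : J → Type*} [∀ j, NormedAddCommGroup (Hs j)] [∀ j, InnerProductSpace ℂ (Hs j)]
    [∀ j, CompleteSpace (Hs j)]
    (W : J → Submodule ℂ H) [∀ j, CompleteSpace (W j)]
    (v : J → ℝ)
    (Λ : ∀ j, H →L[ℂ] Hs j) (Θ : ∀ j, H →L[ℂ] Hs j)
    (A B : ℝ) (hA : 0 < A) (hAB : A ≤ B)
    (hframe : ∀ f : H,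
        Summable (fun j => (v j) ^ 2 * ‖Λ j (gfProj W j f)‖ ^ 2) ∧
        A * ‖f‖ ^ 2 ≤ ∑' j, (v j) ^ 2 * ‖Λ j (gfProj W j f)‖ ^ 2 ∧
        ∑' j, (v j) ^ 2 * ‖Λ j (gfProj W j f)‖ ^ 2 ≤ B * ‖f‖ ^ 2)
    (R : ℝ)
    (hpert : ∀ f : H,
        Summable (fun j => (v j) ^ 2 *
          ‖gfProj W j (adjoint (Λ j) (Λ j (gfProj W j f))) -
           gfProj W j (adjoint (Θ j) (Θ j (gfProj W j f)))‖) ∧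
        ∑' j, (v j) ^ 2 *
          ‖gfProj W j (adjoint (Λ j) (Λ j (gfProj W j f))) -
           gfProj W j (adjoint (Θ j) (Θ j (gfProj W j f)))‖ ≤ R * ‖f‖) :
    ∀ f : H,
      Summable (fun j => (v j) ^ 2 * ‖Θ j (gfProj W j f)‖ ^ 2) ∧
      (A - R) * ‖f‖ ^ 2 ≤ ∑' j, (v j) ^ 2 * ‖Θ j (gfProj W j f)‖ ^ 2 ∧
      ∑' j, (v j) ^ 2 * ‖Θ j (gfProj W j f)‖ ^ 2 ≤
        (B + R * Real.sqrt (B / A)) * ‖f‖ ^ 2 := by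
  intro f
  obtain ⟨hΛ, hΛ_lower, hΛ_upper⟩ := hframe f
  obtain ⟨hD, hD_le⟩ := hpert f
  set D : J → H := fun j => gfProj W j (adjoint (Λ j) (Λ j (gfProj W j f))) -
    gfProj W j (adjoint (Θ j) (Θ j (gfProj W j f)))
  set c : J → ℝ := fun j => v j ^ 2 * RCLike.re ⟪D j, f⟫_ℂ
  have hΘ_eq : (fun j => v j ^ 2 * ‖Θ j (gfProj W j f)‖ ^ 2) =
      fun j => v j ^ 2 * ‖Λ j (gfProj W j f)‖ ^ 2 - c j := by
    ext j
    simp only [c, D, gfProj_eq_starProjection, inner_sub_left, map_sub,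
      Submodule.re_inner_starProjection_adjoint_apply]
    ring
  have hc_le : ∀ j, ‖c j‖ ≤ v j ^ 2 * ‖D j‖ * ‖f‖ := fun j => by
    rw [norm_mul, norm_pow, Real.norm_eq_abs, sq_abs, mul_assoc]
    exact mul_le_mul_of_nonneg_left
      ((RCLike.norm_re_le_norm _).trans (norm_inner_le_norm _ _)) (sq_nonneg _)
  have hc_tsum : |∑' j, c j| ≤ R * ‖f‖ ^ 2 :=
    calc |∑' j, c j| ≤ ∑' j, v j ^ 2 * ‖D j‖ * ‖f‖ :=
          tsum_of_norm_bounded (hD.mul_right ‖f‖).hasSum hc_le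
      _ = (∑' j, v j ^ 2 * ‖D j‖) * ‖f‖ := tsum_mul_right
      _ ≤ R * ‖f‖ ^ 2 := by nlinarith [norm_nonneg f]
  have hc : Summable c := .of_norm_bounded (hD.mul_right ‖f‖) hc_le
  have hsqrt : 1 ≤ Real.sqrt (B / A) := Real.one_le_sqrt.mpr ((one_le_div hA).mpr hAB)
  rw [hΘ_eq, hΛ.tsum_sub hc]
  obtain ⟨hc_lower, hc_upper⟩ := abs_le.mp hc_tsum
  have hR_le : R * ‖f‖ ^ 2 ≤ R * ‖f‖ ^ 2 * Real.sqrt (B / A) :=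
    le_mul_of_one_le_right ((abs_nonneg _).trans hc_tsum) hsqrt
  exact ⟨hΛ.sub hc, by linarith, by linarith⟩

/-- perturbation: if `Λ` is a g-fusion frame with bounds `A, B`, `0 < R < A`,
and `Σ_j v_j² ‖π_{W_j}Λ_j*Λ_jπ_{W_j} f − π_{W_j}Θ_j*Θ_jπ_{W_j} f‖ ≤ R‖f‖` for all `f`, then
`Θ = (W_j, Θ_j, v_j)` is a g-fusion frame with bounds `A − R` and `B + R√(B/A)`. -/
theorem gfusion_frame_perturbation_R
    {H : Type*} [NormedAddCommGroup H] [InnerProductSpace ℂ H] [CompleteSpace H]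
    {J : Type*} [Countable J]
    {Hs : J → Type*} [∀ j, NormedAddCommGroup (Hs j)] [∀ j, InnerProductSpace ℂ (Hs j)]
    [∀ j, CompleteSpace (Hs j)]
    (W : J → Submodule ℂ H) [∀ j, CompleteSpace (W j)]
    (v : J → ℝ) (hv : ∀ j, 0 < v j)
    (Λ : ∀ j, H →L[ℂ] Hs j) (Θ : ∀ j, H →L[ℂ] Hs j)
    (A B : ℝ) (hA : 0 < A) (hAB : A ≤ B)
    (hframe : ∀ f : H,
        Summable (fun j => (v j) ^ 2 * ‖Λ j (gfProj W j f)‖ ^ 2) ∧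
        A * ‖f‖ ^ 2 ≤ ∑' j, (v j) ^ 2 * ‖Λ j (gfProj W j f)‖ ^ 2 ∧
        ∑' j, (v j) ^ 2 * ‖Λ j (gfProj W j f)‖ ^ 2 ≤ B * ‖f‖ ^ 2)
    (R : ℝ) (hR : 0 < R) (hRA : R < A)
    (hpert : ∀ f : H,
        Summable (fun j => (v j) ^ 2 *
          ‖gfProj W j (adjoint (Λ j) (Λ j (gfProj W j f))) -
           gfProj W j (adjoint (Θ j) (Θ j (gfProj W j f)))‖) ∧
        ∑' j, (v j) ^ 2 *
          ‖gfProj W j (adjoint (Λ j) (Λ j (gfProj W j f))) -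
           gfProj W j (adjoint (Θ j) (Θ j (gfProj W j f)))‖ ≤ R * ‖f‖) :
    ∀ f : H,
      Summable (fun j => (v j) ^ 2 * ‖Θ j (gfProj W j f)‖ ^ 2) ∧
      (A - R) * ‖f‖ ^ 2 ≤ ∑' j, (v j) ^ 2 * ‖Θ j (gfProj W j f)‖ ^ 2 ∧
      ∑' j, (v j) ^ 2 * ‖Θ j (gfProj W j f)‖ ^ 2 ≤
        (B + R * Real.sqrt (B / A)) * ‖f‖ ^ 2 :=
  gfusion_frame_perturbation_R_general W v Λ Θ A B hA hAB hframe R hpert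
end
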